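/- Let m, M, B be real numbers with 0 < m ≤ M and B > 0, and set φ := M/m. Then for every z ∈ [0, B], max{(z√(Mm) + m(B−z))/(mB), (z√(Mm) + M(B−z))/(√(Mm)·B)} ≥ (1/2)(1 + √φ). -/

import Mathlib

/-!
The dependence on `z` cancels in the sum of the two cost ratios, because `√(Mm)² = Mm`: the
ratios always add up to `1 + √(Mm)/m = 1 + √φ`. Hence the larger of them is at least half of that.
-/

lemma add_div_two_le_max {α : Type*} [Field α] [LinearOrder α] [IsStrictOrderedRing α]
    (a b : α) : (a + b) / 2 ≤ max a b := by
  linarith [le_max_left a b, le_max_right a b]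

lemma sqrt_div_eq_sqrt_mul_div (x : ℝ) {y : ℝ} (hy : 0 < y) : √(x / y) = √(x * y) / y := by
  rw [show x / y = x * y / y ^ 2 by field_simp, Real.sqrt_div' _ (sq_nonneg y),
    Real.sqrt_sq hy.le]

lemma adversary_ratios_sum {m M B s : ℝ} (z : ℝ) (hm : m ≠ 0) (hB : B ≠ 0) (hs : s ≠ 0)
    (hs2 : s ^ 2 = M * m) :
    (z * s + m * (B - z)) / (m * B) + (z * s + M * (B - z)) / (s * B) = 1 + s / m := by
  field_simp
  linear_combination (z - B) * hs2

/-- Lower bound of Theorem 2: for every z ∈ [0,B], the worse of the two adversarial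
cost ratios is at least (1/2)(1 + √φ). -/
theorem adversary_lower_bound (m M B φ : ℝ)
    (hm : 0 < m) (hmM : m ≤ M) (hB : 0 < B) (hφ : φ = M / m) :
    ∀ z ∈ Set.Icc (0 : ℝ) B,
      max ((z * Real.sqrt (M * m) + m * (B - z)) / (m * B))
          ((z * Real.sqrt (M * m) + M * (B - z)) / (Real.sqrt (M * m) * B))
        ≥ (1/2) * (1 + Real.sqrt φ) := by
  intro z _
  have hMm : 0 < M * m := mul_pos (hm.trans_le hmM) hm
  have hsum := adversary_ratios_sum z hm.ne' hB.ne' (Real.sqrt_pos.mpr hMm).ne'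
    (Real.sq_sqrt hMm.le)
  calc (1 / 2) * (1 + √φ) = (_ + _) / 2 := by
        rw [hsum, hφ, sqrt_div_eq_sqrt_mul_div M hm]; ring
    _ ≤ max _ _ := add_div_two_le_max _ _
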